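/- arXiv:2102.13244 — 3 statements merged into one kernel-verified Lean document; each statement's English description precedes it below -/
import Mathlib

section
/- Fix t ≥ 1 and set u = (1/t², 1)ᵀ ∈ ℝ², v = (−t, 1/t)ᵀ ∈ ℝ², Q¹ = u uᵀ, Q² = v vᵀ. Let Q̂¹ = Q¹ and let Q̂² be Q² with its first row and column set to zero, so Q̂² = [[0, 0], [0, 1/t²]]. Then (i) u and v are orthogonal and ‖Q¹ + Q²‖ = max{‖u‖², ‖v‖²} = t² + 1/t², and (ii) ‖Q̂¹ + Q̂²‖ ≤ 1 + 1/t² + 1/t⁴. Consequently the ratio M/L := √(‖Q¹+Q²‖)/√(‖Q̂¹+Q̂²‖) tends to infinity as t → ∞. -/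
open scoped RealInnerProductSpace

/-- Operator norm of a square real matrix, viewed as a linear map on Euclidean space. -/
noncomputable def matOpNorm {d : ℕ} (Q : Matrix (Fin d) (Fin d) ℝ) : ℝ :=
  ‖Matrix.toEuclideanCLM (𝕜 := ℝ) Q‖

/-- The vector `u = (1/t², 1)ᵀ`. -/
noncomputable def uVec (t : ℝ) : EuclideanSpace ℝ (Fin 2) := WithLp.toLp 2 ![1 / t ^ 2, 1]

/-- The vector `v = (−t, 1/t)ᵀ`. -/
noncomputable def vVec (t : ℝ) : EuclideanSpace ℝ (Fin 2) := WithLp.toLp 2 ![-t, 1 / t]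

/-- `Q¹ = u uᵀ`. -/
noncomputable def Q1 (t : ℝ) : Matrix (Fin 2) (Fin 2) ℝ :=
  Matrix.vecMulVec (uVec t) (uVec t)

/-- `Q² = v vᵀ`. -/
noncomputable def Q2 (t : ℝ) : Matrix (Fin 2) (Fin 2) ℝ :=
  Matrix.vecMulVec (vVec t) (vVec t)

/-- `Q̂²`, i.e. `Q²` with its first row and column set to zero. -/
noncomputable def Q2hat (t : ℝ) : Matrix (Fin 2) (Fin 2) ℝ := !![0, 0; 0, 1 / t ^ 2]

/-!
For orthogonal `u, v` the operator `T x = ⟪u, x⟫ u + ⟪v, x⟫ v` satisfies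
`‖T x‖² = ⟪u, x⟫² ‖u‖² + ⟪v, x⟫² ‖v‖² ≤ M ⟪T x, x⟫ ≤ M ‖T x‖ ‖x‖` with `M = max (‖u‖², ‖v‖²)`,
so `‖T‖ ≤ M`; conversely `⟪T u, u⟫ ≥ ‖u‖⁴` forces `‖T‖ ≥ ‖u‖²`, and likewise for `v`.
Since `Q̂² = v̂ v̂ᵀ` with `v̂ = (0, 1/t)`, the same two estimates trap `‖Q̂¹ + Q̂²‖` between
`‖u‖² ≥ 1` and `‖u‖² + ‖v̂‖² ≤ 3`, while `‖Q¹ + Q²‖ ≥ ‖v‖² ≥ t²`.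
-/

open InnerProductSpace

section RankOne

variable {E : Type*} [NormedAddCommGroup E] [InnerProductSpace ℝ E]

theorem ContinuousLinearMap.opNorm_le_of_norm_sq_le_inner {T : E →L[ℝ] E} {M : ℝ} (hM : 0 ≤ M)
    (h : ∀ x, ‖T x‖ ^ 2 ≤ M * ⟪T x, x⟫) : ‖T‖ ≤ M := by
  refine T.opNorm_le_bound hM fun x ↦ ?_
  have h_sq : ‖T x‖ ^ 2 ≤ M * ‖x‖ * ‖T x‖ := calc
    ‖T x‖ ^ 2 ≤ M * ⟪T x, x⟫ := h x
    _ ≤ M * (‖T x‖ * ‖x‖) := by gcongr; exact real_inner_le_norm _ _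
    _ = M * ‖x‖ * ‖T x‖ := by ring
  rcases (norm_nonneg (T x)).eq_or_lt with h0 | hpos
  · rw [← h0]; positivity
  · exact le_of_mul_le_mul_right (by rwa [← sq]) hpos

theorem sq_norm_le_opNorm_rankOne_add_rankOne (u w : E) :
    ‖u‖ ^ 2 ≤ ‖rankOne ℝ u u + rankOne ℝ w w‖ := by
  set T := rankOne ℝ u u + rankOne ℝ w w
  have h_inner : ‖u‖ ^ 2 * ‖u‖ ^ 2 ≤ ⟪T u, u⟫ := by
    simp only [T, add_apply, rankOne_apply, inner_add_left,
      real_inner_smul_left, real_inner_self_eq_norm_sq, real_inner_comm u w]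
    exact le_add_of_nonneg_right (mul_self_nonneg _)
  have h_le : ⟪T u, u⟫ ≤ ‖T‖ * ‖u‖ ^ 2 := calc
    ⟪T u, u⟫ ≤ ‖T u‖ * ‖u‖ := real_inner_le_norm _ _
    _ ≤ ‖T‖ * ‖u‖ * ‖u‖ := by gcongr; exact T.le_opNorm u
    _ = ‖T‖ * ‖u‖ ^ 2 := by ring
  rcases eq_or_lt_of_le (sq_nonneg ‖u‖) with hu | hu
  · rw [← hu]; exact norm_nonneg T
  · exact le_of_mul_le_mul_right (h_inner.trans h_le) hu

theorem opNorm_rankOne_add_rankOne_of_inner_eq_zero {u v : E} (huv : ⟪u, v⟫ = 0) :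
    ‖rankOne ℝ u u + rankOne ℝ v v‖ = max (‖u‖ ^ 2) (‖v‖ ^ 2) := by
  refine le_antisymm (ContinuousLinearMap.opNorm_le_of_norm_sq_le_inner (by positivity) fun x ↦ ?_)
    (max_le (sq_norm_le_opNorm_rankOne_add_rankOne u v)
      (add_comm (rankOne ℝ u u) _ ▸ sq_norm_le_opNorm_rankOne_add_rankOne v u))
  set a := ⟪u, x⟫
  set b := ⟪v, x⟫
  have h_apply : (rankOne ℝ u u + rankOne ℝ v v) x = a • u + b • v := rfl
  have h_orth : ⟪a • u, b • v⟫ = 0 := by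
    rw [real_inner_smul_left, real_inner_smul_right, huv, mul_zero, mul_zero]
  have h_norm : ‖a • u + b • v‖ ^ 2 = a ^ 2 * ‖u‖ ^ 2 + b ^ 2 * ‖v‖ ^ 2 := by
    rw [sq, norm_add_sq_eq_norm_sq_add_norm_sq_real h_orth, norm_smul, norm_smul,
      Real.norm_eq_abs, Real.norm_eq_abs]
    linear_combination ‖u‖ ^ 2 * abs_mul_abs_self a + ‖v‖ ^ 2 * abs_mul_abs_self b
  have h_inner : ⟪a • u + b • v, x⟫ = a ^ 2 + b ^ 2 := by
    rw [inner_add_left, real_inner_smul_left, real_inner_smul_left]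
    ring
  rw [h_apply, h_norm, h_inner, mul_add, mul_comm _ (a ^ 2), mul_comm _ (b ^ 2)]
  gcongr
  exacts [le_max_left _ _, le_max_right _ _]

end RankOne

theorem Matrix.toEuclideanCLM_vecMulVec {n : Type*} [Fintype n] [DecidableEq n]
    (x y : EuclideanSpace ℝ n) :
    Matrix.toEuclideanCLM (𝕜 := ℝ) (Matrix.vecMulVec x y) = rankOne ℝ x y := by
  ext z i
  simp [Matrix.vecMulVec_mulVec, dotProduct, PiLp.inner_apply, mul_comm]

theorem Filter.Tendsto.atTop_div_of_le {α : Type*} {l : Filter α} {f g : α → ℝ} {C : ℝ}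
    (hC : 0 < C) (hf : Tendsto f l atTop) (hg : ∀ᶠ x in l, 0 < g x ∧ g x ≤ C) :
    Tendsto (fun x ↦ f x / g x) l atTop := by
  refine tendsto_atTop_mono' l ?_ (hf.atTop_div_const hC)
  filter_upwards [hg, hf.eventually_ge_atTop 0] with x ⟨hg_pos, hg_le⟩ hf_nonneg
  exact div_le_div_of_nonneg_left hf_nonneg hg_pos hg_le

noncomputable def vHatVec (t : ℝ) : EuclideanSpace ℝ (Fin 2) := WithLp.toLp 2 ![0, 1 / t]

theorem Q2hat_eq_vecMulVec (t : ℝ) : Q2hat t = Matrix.vecMulVec (vHatVec t) (vHatVec t) := by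
  ext i j
  fin_cases i <;> fin_cases j <;> simp [Q2hat, vHatVec, Matrix.vecMulVec_apply, sq]

theorem norm_uVec_sq (t : ℝ) : ‖uVec t‖ ^ 2 = 1 + 1 / t ^ 4 := by
  simp [EuclideanSpace.norm_sq_eq, Fin.sum_univ_two, uVec, add_comm, ← pow_mul]

theorem norm_vVec_sq (t : ℝ) : ‖vVec t‖ ^ 2 = t ^ 2 + 1 / t ^ 2 := by
  simp [EuclideanSpace.norm_sq_eq, Fin.sum_univ_two, vVec]

theorem norm_vHatVec_sq (t : ℝ) : ‖vHatVec t‖ ^ 2 = 1 / t ^ 2 := by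
  simp [EuclideanSpace.norm_sq_eq, Fin.sum_univ_two, vHatVec]

theorem inner_uVec_vVec {t : ℝ} (ht : t ≠ 0) : ⟪uVec t, vVec t⟫ = 0 := by
  simp only [uVec, vVec, PiLp.inner_apply, RCLike.inner_apply, Real.ringHom_apply,
    Fin.sum_univ_two, Matrix.cons_val_zero, Matrix.cons_val_one, Matrix.cons_val_fin_one]
  field_simp
  ring

theorem matOpNorm_Q1_add_Q2 {t : ℝ} (ht : t ≠ 0) :
    matOpNorm (Q1 t + Q2 t) = max (‖uVec t‖ ^ 2) (‖vVec t‖ ^ 2) := by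
  rw [matOpNorm, Q1, Q2, map_add, Matrix.toEuclideanCLM_vecMulVec,
    Matrix.toEuclideanCLM_vecMulVec]
  exact opNorm_rankOne_add_rankOne_of_inner_eq_zero (inner_uVec_vVec ht)

theorem max_norm_sq_uVec_vVec {t : ℝ} (ht : 1 ≤ t) :
    max (‖uVec t‖ ^ 2) (‖vVec t‖ ^ 2) = t ^ 2 + 1 / t ^ 2 := by
  have h_t2 : 1 ≤ t ^ 2 := one_le_pow₀ ht
  have h_t4 : 1 / t ^ 4 ≤ 1 / t ^ 2 :=
    one_div_le_one_div_of_le (by positivity) (pow_le_pow_right₀ ht (by norm_num))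
  rw [norm_uVec_sq, norm_vVec_sq, max_eq_right (by linarith)]

theorem matOpNorm_Q1_add_Q2hat_le (t : ℝ) :
    matOpNorm (Q1 t + Q2hat t) ≤ 1 + 1 / t ^ 2 + 1 / t ^ 4 := by
  rw [matOpNorm, Q1, Q2hat_eq_vecMulVec, map_add, Matrix.toEuclideanCLM_vecMulVec,
    Matrix.toEuclideanCLM_vecMulVec]
  calc _ ≤ ‖rankOne ℝ (uVec t) (uVec t)‖ + ‖rankOne ℝ (vHatVec t) (vHatVec t)‖ := norm_add_le _ _
    _ = 1 + 1 / t ^ 2 + 1 / t ^ 4 := by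
      rw [norm_rankOne, norm_rankOne, ← sq, ← sq, norm_uVec_sq, norm_vHatVec_sq]; ring

theorem one_le_matOpNorm_Q1_add_Q2hat (t : ℝ) : 1 ≤ matOpNorm (Q1 t + Q2hat t) := by
  rw [matOpNorm, Q1, Q2hat_eq_vecMulVec, map_add, Matrix.toEuclideanCLM_vecMulVec,
    Matrix.toEuclideanCLM_vecMulVec]
  calc (1 : ℝ) ≤ 1 + 1 / t ^ 4 := le_add_of_nonneg_right (by positivity)
    _ = ‖uVec t‖ ^ 2 := (norm_uVec_sq t).symm
    _ ≤ _ := sq_norm_le_opNorm_rankOne_add_rankOne _ _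

/-- **Statement 3.** For `t ≥ 1`: (i) `u ⊥ v` and `‖Q¹ + Q²‖ = max{‖u‖², ‖v‖²} = t² + 1/t²`;
(ii) `‖Q̂¹ + Q̂²‖ ≤ 1 + 1/t² + 1/t⁴` (here `Q̂¹ = Q¹`). Consequently, the ratio
`M/L = √‖Q¹+Q²‖ / √‖Q̂¹+Q̂²‖` tends to infinity as `t → ∞`. -/
theorem stmt3 :
    (∀ t : ℝ, 1 ≤ t →
      ⟪uVec t, vVec t⟫ = 0 ∧
      matOpNorm (Q1 t + Q2 t) = max (‖uVec t‖ ^ 2) (‖vVec t‖ ^ 2) ∧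
      max (‖uVec t‖ ^ 2) (‖vVec t‖ ^ 2) = t ^ 2 + 1 / t ^ 2 ∧
      matOpNorm (Q1 t + Q2hat t) ≤ 1 + 1 / t ^ 2 + 1 / t ^ 4) ∧
    Filter.Tendsto
      (fun t : ℝ => Real.sqrt (matOpNorm (Q1 t + Q2 t)) / Real.sqrt (matOpNorm (Q1 t + Q2hat t)))
      Filter.atTop Filter.atTop := by
  refine ⟨fun t ht ↦ ?_, ?_⟩
  · have ht0 : t ≠ 0 := (zero_lt_one.trans_le ht).ne'
    exact ⟨inner_uVec_vVec ht0, matOpNorm_Q1_add_Q2 ht0, max_norm_sq_uVec_vVec ht,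
      matOpNorm_Q1_add_Q2hat_le t⟩
  have h_num : Filter.Tendsto (fun t ↦ √(matOpNorm (Q1 t + Q2 t))) Filter.atTop Filter.atTop := by
    refine Real.tendsto_sqrt_atTop.comp
      (Filter.tendsto_atTop_mono' _ ?_ (Filter.tendsto_pow_atTop two_ne_zero))
    filter_upwards [Filter.eventually_ge_atTop 1] with t ht
    rw [matOpNorm_Q1_add_Q2 (zero_lt_one.trans_le ht).ne', max_norm_sq_uVec_vVec ht]
    exact le_add_of_nonneg_right (by positivity)
  refine h_num.atTop_div_of_le (C := √3) (by positivity) ?_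
  filter_upwards [Filter.eventually_ge_atTop 1] with t ht
  have h_t2 : 1 / t ^ 2 ≤ 1 := div_le_one_of_le₀ (one_le_pow₀ ht) (by positivity)
  have h_t4 : 1 / t ^ 4 ≤ 1 := div_le_one_of_le₀ (one_le_pow₀ ht) (by positivity)
  exact ⟨Real.sqrt_pos.2 (zero_lt_one.trans_le (one_le_matOpNorm_Q1_add_Q2hat t)),
    Real.sqrt_le_sqrt (by linarith [matOpNorm_Q1_add_Q2hat_le t])⟩
end

section
/- Let γ ≥ 0 and L > 0, and define the sequences a_k and A_k by A₀ = 0 and, for k ≥ 1, a_k = (1 + γ A_{k−1})/(2L), A_k = A_{k−1} + a_k. Then for every k ≥ 1, A_k ≥ k/(2L) and A_k ≥ (1/(2L))·(1 + γ/(2L))^{k−1}; hence A_k ≥ max{k/(2L), (1/(2L))(1 + γ/(2L))^{k−1}}. -/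
/-!
Eliminating `a`, the sequence obeys the affine recursion `A (k+1) = q * A k + c` with
`q = 1 + γ/(2L) ≥ 1` and `c = 1/(2L) > 0`. Since `A` stays nonnegative, each step adds at least
`c` (as `q * A k ≥ A k`), giving the linear bound, and multiplies by at least `q` (as `c ≥ 0`),
giving the geometric bound.
-/

section AffineRecursion

variable {q c : ℝ} {A : ℕ → ℝ}

theorem natCast_mul_le_of_affine_rec (hq : 1 ≤ q) (hc : 0 ≤ c) (hA0 : 0 ≤ A 0)
    (hA : ∀ k, A (k + 1) = q * A k + c) (k : ℕ) : k * c ≤ A k := by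
  induction k with
  | zero => simpa using hA0
  | succ k ih =>
    have hAk : 0 ≤ A k := le_trans (by positivity) ih
    have hstep : A k ≤ q * A k := le_mul_of_one_le_left hAk hq
    push_cast
    linarith [hA k]

theorem mul_pow_le_of_affine_rec (hq : 0 ≤ q) (hc : 0 ≤ c) (hA0 : 0 ≤ A 0)
    (hA : ∀ k, A (k + 1) = q * A k + c) (k : ℕ) : c * q ^ k ≤ A (k + 1) := by
  induction k with
  | zero => nlinarith [hA 0]
  | succ k ih =>
    calc c * q ^ (k + 1) = q * (c * q ^ k) := by ring
      _ ≤ q * A (k + 1) := mul_le_mul_of_nonneg_left ih hq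
      _ ≤ A (k + 1 + 1) := by linarith [hA (k + 1)]

end AffineRecursion

theorem stmt7_general (γ L : ℝ) (hγ : 0 ≤ γ) (hL : 0 < L)
    (a A : ℕ → ℝ) (hA0 : A 0 = 0)
    (ha : ∀ k : ℕ, a (k + 1) = (1 + γ * A k) / (2 * L))
    (hA : ∀ k : ℕ, A (k + 1) = A k + a (k + 1)) :
    ∀ k : ℕ, 1 ≤ k →
      A k ≥ (k : ℝ) / (2 * L) ∧
      A k ≥ (1 / (2 * L)) * (1 + γ / (2 * L)) ^ (k - 1) ∧
      A k ≥ max ((k : ℝ) / (2 * L)) ((1 / (2 * L)) * (1 + γ / (2 * L)) ^ (k - 1)) := by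
  have hrec : ∀ k, A (k + 1) = (1 + γ / (2 * L)) * A k + 1 / (2 * L) := fun k => by
    rw [hA, ha]; ring
  have hq : 1 ≤ 1 + γ / (2 * L) := le_add_of_nonneg_right (by positivity)
  have hc : 0 ≤ 1 / (2 * L) := by positivity
  rintro k hk
  obtain ⟨n, rfl⟩ : ∃ n, k = n + 1 := ⟨k - 1, by omega⟩
  have hlin : ((n + 1 : ℕ) : ℝ) / (2 * L) ≤ A (n + 1) := by
    simpa only [mul_one_div] using
      natCast_mul_le_of_affine_rec hq hc hA0.ge hrec (n + 1)
  have hgeom : 1 / (2 * L) * (1 + γ / (2 * L)) ^ (n + 1 - 1) ≤ A (n + 1) := by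
    simpa only [Nat.add_sub_cancel] using
      mul_pow_le_of_affine_rec (zero_le_one.trans hq) hc hA0.ge hrec n
  exact ⟨hlin, hgeom, max_le hlin hgeom⟩

/-- **Statement 7.** With `A₀ = 0` and, for `k ≥ 1`, `a_k = (1 + γ A_{k−1})/(2L)` and
`A_k = A_{k−1} + a_k` (where `γ ≥ 0`, `L > 0`), one has, for every `k ≥ 1`,
`A_k ≥ k/(2L)` and `A_k ≥ (1/(2L))(1 + γ/(2L))^{k−1}`; hence `A_k` is at least the
maximum of the two. -/
theorem stmt7 (γ L : ℝ) (hγ : 0 ≤ γ) (hL : 0 < L)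
    (a A : ℕ → ℝ) (ha0 : a 0 = 0) (hA0 : A 0 = 0)
    (ha : ∀ k : ℕ, a (k + 1) = (1 + γ * A k) / (2 * L))
    (hA : ∀ k : ℕ, A (k + 1) = A k + a (k + 1)) :
    ∀ k : ℕ, 1 ≤ k →
      A k ≥ (k : ℝ) / (2 * L) ∧
      A k ≥ (1 / (2 * L)) * (1 + γ / (2 * L)) ^ (k - 1) ∧
      A k ≥ max ((k : ℝ) / (2 * L)) ((1 / (2 * L)) * (1 + γ / (2 * L)) ^ (k - 1)) :=
  stmt7_general γ L hγ hL a A hA0 ha hA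
end

section
/- Consider the CODER iteration: x₋₁ = x₀ ∈ ℝ^d, p₀ = F(x₀), a₀ = A₀ = 0, and for k ≥ 1: a_k = (1+γA_{k−1})/(2L), A_k = A_{k−1} + a_k; for i = 1,…,m in order, p_kⁱ = Fⁱ(x_k¹,…,x_k^{i−1}, x_{k−1}ⁱ,…,x_{k−1}ᵐ), q_kⁱ = p_kⁱ + (a_{k−1}/a_k)(Fⁱ(x_{k−1}) − p_{k−1}ⁱ), and x_kⁱ is the minimizer over ℝ^{dⁱ} of ψ_kⁱ(xⁱ) = ∑_{j=1}^k a_j(⟨q_jⁱ, xⁱ⟩ + gⁱ(xⁱ)) + ½‖xⁱ − x₀ⁱ‖². Then (Lemma 2) for every u ∈ ℝ^d and k ≥ 1, with ψ_k(x; u) := ∑_{j=1}^k a_j(⟨q_j, x − u⟩ + g(x) − g(u)) + ½‖x − x₀‖²: ψ_k(x_k; u) ≥ ∑_{j=1}^k a_j(⟨F(x_j), x_j − u⟩ + g(x_j) − g(u)) − ((1+γA_k)/4)‖u − x_k‖² + ∑_{j=1}^k [ ((1+γA_{j−1})/4)‖x_j − x_{j−1}‖² − (a_j²/(1+γA_j))‖F(x_j)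 − p_j‖² ]. -/
open scoped RealInnerProductSpace

/-!
The estimation function `ψ_k(·; u)` is a sum of affine terms, of the `γ`-strongly convex terms
`a_j G` and of `½‖· - x₀‖²`, hence `(1 + γA_k)`-strongly convex, so its minimizer satisfies
`ψ_k(x_k) + (1 + γA_k)/2 ‖z - x_k‖² ≤ ψ_k(z)`. Taking `z = x_{k+1}` and adding the `(k+1)`-st
term, the extrapolation `a_{k+1} q_{k+1} = a_{k+1} F(x_{k+1}) - a_{k+1} e_{k+1} + a_k e_k`, where
`e_j = F(x_j) - p_j`, telescopes the error terms `a_j ⟪e_j, x_j - u⟫`; the leftover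
`a_k ⟪e_k, x_{k+1} - x_k⟫` is absorbed by Young's inequality into half of the quadratic growth
term. A last application of Young's inequality to `a_k ⟪e_k, u - x_k⟫` gives the
`-(1 + γA_k)/4 ‖u - x_k‖²` term.
-/

open Finset Filter Topology

theorem ConvexOn.finset_sum {ι 𝕜 E β : Type*} [Semiring 𝕜] [PartialOrder 𝕜]
    [AddCommMonoid E] [SMul 𝕜 E] [AddCommMonoid β] [PartialOrder β] [IsOrderedAddMonoid β]
    [Module 𝕜 β] {s : Set E} (hs : Convex 𝕜 s) (t : Finset ι) {f : ι → E → β}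
    (hf : ∀ i ∈ t, ConvexOn 𝕜 s (f i)) : ConvexOn 𝕜 s fun z => ∑ i ∈ t, f i z := by
  classical
  induction t using Finset.induction_on with
  | empty => simpa using convexOn_const (0 : β) hs
  | insert i t hi ih =>
    simp only [sum_insert hi]
    exact (hf i (mem_insert_self i t)).add (ih fun j hj => hf j (mem_insert_of_mem hj))

section StrongConvexity

variable {E : Type*} [NormedAddCommGroup E] [InnerProductSpace ℝ E] {s : Set E} {m n : ℝ}
  {f g : E → ℝ}

theorem StrongConvexOn.add (hf : StrongConvexOn s m f) (hg : StrongConvexOn s n g) :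
    StrongConvexOn s (m + n) fun z => f z + g z := by
  rw [strongConvexOn_iff_convex] at *
  exact (hf.add hg).congr fun z _ => by simp only [Pi.add_apply]; ring

theorem StrongConvexOn.add_convexOn (hf : StrongConvexOn s m f) (hg : ConvexOn ℝ s g) :
    StrongConvexOn s m fun z => f z + g z := by
  simpa using hf.add (strongConvexOn_zero.2 hg)

theorem StrongConvexOn.const_mul (hf : StrongConvexOn s m f) {c : ℝ} (hc : 0 ≤ c) :
    StrongConvexOn s (c * m) fun z => c * f z := by
  rw [strongConvexOn_iff_convex] at *
  exact (hf.smul hc).congr fun z _ => by simp only [smul_eq_mul]; ring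

theorem StrongConvexOn.finset_sum {ι : Type*} (hs : Convex ℝ s) (t : Finset ι) {m : ι → ℝ}
    {f : ι → E → ℝ} (hf : ∀ i ∈ t, StrongConvexOn s (m i) (f i)) :
    StrongConvexOn s (∑ i ∈ t, m i) fun z => ∑ i ∈ t, f i z := by
  simp only [strongConvexOn_iff_convex] at *
  exact (ConvexOn.finset_sum hs t hf).congr fun z _ => by
    simp only [sum_sub_distrib, sum_div, sum_mul]

theorem strongConvexOn_half_sq_norm_sub (c : E) :
    StrongConvexOn Set.univ 1 fun z => 1 / 2 * ‖z - c‖ ^ 2 := by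
  rw [strongConvexOn_iff_convex]
  refine (((innerₛₗ ℝ (-c)).convexOn convex_univ).add_const (1 / 2 * ‖c‖ ^ 2)).congr
    fun z _ => ?_
  simp only [Pi.add_apply, innerₛₗ_apply_apply, inner_neg_left, norm_sub_sq_real,
    real_inner_comm c z]
  ring

theorem StrongConvexOn.add_sq_norm_sub_le_of_isMinOn (hf : StrongConvexOn s m f) {x y : E}
    (hmin : IsMinOn f s x) (hx : x ∈ s) (hy : y ∈ s) :
    f x + m / 2 * ‖y - x‖ ^ 2 ≤ f y := by
  -- compare `f` at `x` and at `t • y + (1 - t) • x`, then let `t ↓ 0`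
  have hseg : ∀ t ∈ Set.Ioo (0 : ℝ) 1, f x + (1 - t) * (m / 2 * ‖y - x‖ ^ 2) ≤ f y := by
    rintro t ⟨ht0, ht1⟩
    have hconv := hf.2 hy hx ht0.le (sub_nonneg.2 ht1.le) (add_sub_cancel t 1)
    have hle := hmin (hf.1 hy hx ht0.le (sub_nonneg.2 ht1.le) (add_sub_cancel t 1))
    simp only [smul_eq_mul, Set.mem_ofPred_eq] at hconv hle
    nlinarith
  have hlim : Tendsto (fun t : ℝ => f x + (1 - t) * (m / 2 * ‖y - x‖ ^ 2)) (𝓝[>] 0)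
      (𝓝 (f x + m / 2 * ‖y - x‖ ^ 2)) := by
    refine tendsto_nhdsWithin_of_tendsto_nhds ?_
    have hcont : Continuous fun t : ℝ => f x + (1 - t) * (m / 2 * ‖y - x‖ ^ 2) := by fun_prop
    simpa using hcont.tendsto 0
  exact le_of_tendsto hlim (eventually_of_mem (Ioo_mem_nhdsGT one_pos) hseg)

end StrongConvexity

theorem neg_sq_div_mul_sq_sub_le_mul_inner {E : Type*} [NormedAddCommGroup E]
    [InnerProductSpace ℝ E] {μ : ℝ} (hμ : 0 < μ) (c : ℝ) (v w : E) :
    -(c ^ 2 / μ * ‖v‖ ^ 2) - μ / 4 * ‖w‖ ^ 2 ≤ c * ⟪v, w⟫ := by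
  have hsq : ‖c • v + (μ / 2) • w‖ ^ 2
      = c ^ 2 * ‖v‖ ^ 2 + μ * (c * ⟪v, w⟫) + μ ^ 2 / 4 * ‖w‖ ^ 2 := by
    rw [norm_add_sq_real, norm_smul, norm_smul, real_inner_smul_left, real_inner_smul_right,
      mul_pow, mul_pow, Real.norm_eq_abs, Real.norm_eq_abs, sq_abs, sq_abs]
    ring
  have h : 0 ≤ ‖c • v + (μ / 2) • w‖ ^ 2 / μ := by positivity
  rw [hsq] at h
  have : (c ^ 2 * ‖v‖ ^ 2 + μ * (c * ⟪v, w⟫) + μ ^ 2 / 4 * ‖w‖ ^ 2) / μ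
      = c ^ 2 / μ * ‖v‖ ^ 2 + c * ⟪v, w⟫ + μ / 4 * ‖w‖ ^ 2 := by
    field_simp
  linarith

theorem strongConvexOn_sum_of_forall_convexOn_sub_blockNormSq {ι β : Type*} [Fintype ι]
    [Fintype β] [DecidableEq β] (blk : ι → β) {γ : ℝ} (g : β → EuclideanSpace ℝ ι → ℝ)
    (hg : ∀ i, ConvexOn ℝ Set.univ fun z : EuclideanSpace ℝ ι =>
      g i z - γ / 2 * ∑ j ∈ univ.filter (fun j => blk j = i), z j ^ 2) :
    StrongConvexOn Set.univ γ fun z => ∑ i, g i z := by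
  rw [strongConvexOn_iff_convex]
  refine (ConvexOn.finset_sum convex_univ univ fun i _ => hg i).congr fun z _ => ?_
  dsimp only
  rw [sum_sub_distrib, ← mul_sum, sum_fiberwise univ blk fun j => z j ^ 2,
    EuclideanSpace.norm_sq_eq]
  simp only [Real.norm_eq_abs, sq_abs]

theorem strongConvexOn_estimation_sum {E ι : Type*} [NormedAddCommGroup E] [InnerProductSpace ℝ E]
    {γ : ℝ} {G : E → ℝ} (hG : StrongConvexOn Set.univ γ G) (t : Finset ι) {a : ι → ℝ}
    (ha : ∀ j ∈ t, 0 ≤ a j) (q : ι → E) (x₀ u : E) :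
    StrongConvexOn Set.univ (1 + γ * ∑ j ∈ t, a j) fun z =>
      ∑ j ∈ t, a j * (⟪q j, z - u⟫ + G z - G u) + 1 / 2 * ‖z - x₀‖ ^ 2 := by
  have hterm : ∀ j ∈ t,
      StrongConvexOn Set.univ (a j * γ) fun z => a j * (⟪q j, z - u⟫ + G z - G u) := by
    intro j hj
    have haff : ConvexOn ℝ Set.univ fun z => ⟪q j, z - u⟫ - G u :=
      (((innerₛₗ ℝ (q j)).convexOn convex_univ).add_const (-⟪q j, u⟫ - G u)).congr fun z _ => by
        simp only [Pi.add_apply, innerₛₗ_apply_apply, inner_sub_right]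
        ring
    convert (hG.add_convexOn haff).const_mul (ha j hj) using 1
    funext z
    ring
  have hsum :=
    (StrongConvexOn.finset_sum convex_univ t hterm).add (strongConvexOn_half_sq_norm_sub x₀)
  rwa [← sum_mul, mul_comm, add_comm] at hsum

section StepSizes

variable {γ L : ℝ} {a A : ℕ → ℝ}

theorem eq_sum_Icc_of_succ_eq_add (hA0 : A 0 = 0) (hA : ∀ k, A (k + 1) = A k + a (k + 1))
    (k : ℕ) : A k = ∑ j ∈ Icc 1 k, a j := by
  induction k with
  | zero => simp [hA0]
  | succ k ih => rw [hA k, sum_Icc_succ_top (Nat.le_add_left 1 k), ih]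

theorem one_add_mul_pos_of_recurrence (hγ : 0 ≤ γ) (hL : 0 < L) (hA0 : A 0 = 0)
    (ha : ∀ k, a (k + 1) = (1 + γ * A k) / (2 * L)) (hA : ∀ k, A (k + 1) = A k + a (k + 1))
    (k : ℕ) : 0 < 1 + γ * A k := by
  suffices 0 ≤ A k by positivity
  induction k with
  | zero => exact hA0.ge
  | succ k ih =>
    have : 0 < a (k + 1) := by rw [ha k]; positivity
    rw [hA k]
    positivity

end StepSizes

section EstimationSequence

variable {E : Type*} [NormedAddCommGroup E] [InnerProductSpace ℝ E]
  {F : E → E} {G : E → ℝ} {a μ : ℕ → ℝ} {x p q : ℕ → E} {ψ : ℕ → E → E → ℝ} {u : E}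

theorem estimation_invariant (hμ : ∀ k, 0 < μ k) (ha0 : a 0 = 0)
    (hψ : ∀ k z w, ψ k z w =
      ∑ j ∈ Icc 1 k, a j * (⟪q j, z - w⟫ + G z - G w) + 1 / 2 * ‖z - x 0‖ ^ 2)
    (hgrowth : ∀ k z, ψ k (x k) u + μ k / 2 * ‖z - x k‖ ^ 2 ≤ ψ k z u)
    (hq : ∀ k, a (k + 1) • q (k + 1) = a (k + 1) • p (k + 1) + a k • (F (x k) - p k))
    (k : ℕ) :
    ∑ j ∈ Icc 1 k, a j * (⟪F (x j), x j - u⟫ + G (x j) - G u)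
      + ∑ j ∈ Icc 1 k,
          (μ (j - 1) / 4 * ‖x j - x (j - 1)‖ ^ 2 - a j ^ 2 / μ j * ‖F (x j) - p j‖ ^ 2)
      + (a k ^ 2 / μ k * ‖F (x k) - p k‖ ^ 2 - a k * ⟪F (x k) - p k, x k - u⟫)
      ≤ ψ k (x k) u := by
  induction k with
  | zero => simp [hψ, ha0]
  | succ k ih =>
    have hrec : ψ (k + 1) (x (k + 1)) u = ψ k (x (k + 1)) u
        + a (k + 1) * (⟪q (k + 1), x (k + 1) - u⟫ + G (x (k + 1)) - G u) := by
      rw [hψ, hψ, sum_Icc_succ_top (Nat.le_add_left 1 k)]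
      ring
    have hinner : a (k + 1) * ⟪q (k + 1), x (k + 1) - u⟫
        = a (k + 1) * ⟪F (x (k + 1)), x (k + 1) - u⟫
          - a (k + 1) * ⟪F (x (k + 1)) - p (k + 1), x (k + 1) - u⟫
          + a k * ⟪F (x k) - p k, x k - u⟫
          + a k * ⟪F (x k) - p k, x (k + 1) - x k⟫ := by
      rw [← real_inner_smul_left, hq k]
      simp only [inner_add_left, inner_sub_left, inner_sub_right, real_inner_smul_left]
      ring
    have hyoung := neg_sq_div_mul_sq_sub_le_mul_inner (hμ k) (a k) (F (x k) - p k)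
      (x (k + 1) - x k)
    rw [sum_Icc_succ_top (Nat.le_add_left 1 k), sum_Icc_succ_top (Nat.le_add_left 1 k),
      Nat.add_sub_cancel]
    linarith [hgrowth k (x (k + 1))]

theorem estimation_lower_bound (hμ : ∀ k, 0 < μ k) (ha0 : a 0 = 0)
    (hψ : ∀ k z w, ψ k z w =
      ∑ j ∈ Icc 1 k, a j * (⟪q j, z - w⟫ + G z - G w) + 1 / 2 * ‖z - x 0‖ ^ 2)
    (hgrowth : ∀ k z, ψ k (x k) u + μ k / 2 * ‖z - x k‖ ^ 2 ≤ ψ k z u)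
    (hq : ∀ k, a (k + 1) • q (k + 1) = a (k + 1) • p (k + 1) + a k • (F (x k) - p k))
    (k : ℕ) :
    ∑ j ∈ Icc 1 k, a j * (⟪F (x j), x j - u⟫ + G (x j) - G u) - μ k / 4 * ‖u - x k‖ ^ 2
      + ∑ j ∈ Icc 1 k,
          (μ (j - 1) / 4 * ‖x j - x (j - 1)‖ ^ 2 - a j ^ 2 / μ j * ‖F (x j) - p j‖ ^ 2)
      ≤ ψ k (x k) u := by
  have hyoung := neg_sq_div_mul_sq_sub_le_mul_inner (hμ k) (-a k) (F (x k) - p k) (x k - u)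
  rw [neg_sq, norm_sub_rev (x k) u] at hyoung
  linarith [estimation_invariant hμ ha0 hψ hgrowth hq k]

end EstimationSequence

theorem stmt9_general {d m : ℕ} (blk : Fin d → Fin m)
    (F : EuclideanSpace ℝ (Fin d) → EuclideanSpace ℝ (Fin d))
    (γ L : ℝ) (hγ : 0 ≤ γ) (hL : 0 < L)
    -- the block components of the separable regularizer g
    (g : Fin m → EuclideanSpace ℝ (Fin d) → ℝ)
    (hgsc : ∀ i : Fin m, ConvexOn ℝ Set.univ (fun z : EuclideanSpace ℝ (Fin d) =>
      g i z - γ / 2 * ∑ j ∈ Finset.univ.filter (fun j => blk j = i), (z j) ^ 2))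
    (G : EuclideanSpace ℝ (Fin d) → ℝ) (hG : ∀ z, G z = ∑ i, g i z)
    -- step sizes
    (a A : ℕ → ℝ) (ha0 : a 0 = 0) (hA0 : A 0 = 0)
    (ha : ∀ k : ℕ, a (k + 1) = (1 + γ * A k) / (2 * L))
    (hA : ∀ k : ℕ, A (k + 1) = A k + a (k + 1))
    -- iterates, cyclic coordinate gradients, and extrapolated gradients
    (x p q : ℕ → EuclideanSpace ℝ (Fin d))
    (hq : ∀ (k : ℕ) (j : Fin d),
      q (k + 1) j = p (k + 1) j + a k / a (k + 1) * (F (x k) j - p k j))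
    -- estimation sequence and its minimization property
    (ψ : ℕ → EuclideanSpace ℝ (Fin d) → EuclideanSpace ℝ (Fin d) → ℝ)
    (hψ : ∀ (k : ℕ) (z u : EuclideanSpace ℝ (Fin d)),
      ψ k z u = ∑ j ∈ Finset.Icc 1 k, a j * (⟪q j, z - u⟫ + G z - G u)
        + 1 / 2 * ‖z - x 0‖ ^ 2)
    (hxmin : ∀ k : ℕ, 1 ≤ k → ∀ u z : EuclideanSpace ℝ (Fin d), ψ k (x k) u ≤ ψ k z u) :
    ∀ (u : EuclideanSpace ℝ (Fin d)) (k : ℕ), 1 ≤ k →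
      ψ k (x k) u ≥
        (∑ j ∈ Finset.Icc 1 k, a j * (⟪F (x j), x j - u⟫ + G (x j) - G u))
        - (1 + γ * A k) / 4 * ‖u - x k‖ ^ 2
        + ∑ j ∈ Finset.Icc 1 k,
            ((1 + γ * A (j - 1)) / 4 * ‖x j - x (j - 1)‖ ^ 2
              - a j ^ 2 / (1 + γ * A j) * ‖F (x j) - p j‖ ^ 2) := by
  intro u k _
  have hμ := one_add_mul_pos_of_recurrence hγ hL hA0 ha hA
  have ha_pos : ∀ k, 0 < a (k + 1) := fun k => ha k ▸ div_pos (hμ k) (by positivity)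
  have hGsc : StrongConvexOn Set.univ γ G := by
    simpa only [← hG] using strongConvexOn_sum_of_forall_convexOn_sub_blockNormSq blk g hgsc
  have hgrowth : ∀ k z, ψ k (x k) u + (1 + γ * A k) / 2 * ‖z - x k‖ ^ 2 ≤ ψ k z u := by
    rintro (_ | k) z
    · simp [hψ, hA0]
    have hψsc : StrongConvexOn Set.univ (1 + γ * A (k + 1)) (ψ (k + 1) · u) := by
      have ha_nonneg : ∀ j ∈ Icc 1 (k + 1), 0 ≤ a j := fun j hj => by
        obtain ⟨i, rfl⟩ := Nat.exists_eq_add_of_le' (mem_Icc.1 hj).1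
        exact (ha_pos i).le
      have h := strongConvexOn_estimation_sum hGsc (Icc 1 (k + 1)) ha_nonneg q (x 0) u
      simpa only [← eq_sum_Icc_of_succ_eq_add hA0 hA, ← hψ] using h
    exact hψsc.add_sq_norm_sub_le_of_isMinOn (isMinOn_univ_iff.2 (hxmin _ k.succ_pos u))
      trivial trivial
  have hq_smul : ∀ k, a (k + 1) • q (k + 1) = a (k + 1) • p (k + 1) + a k • (F (x k) - p k) := by
    intro k
    ext j
    have := (ha_pos k).ne'
    simp only [PiLp.add_apply, PiLp.smul_apply, PiLp.sub_apply, smul_eq_mul, hq k j]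
    field_simp
  exact estimation_lower_bound (μ := fun k => 1 + γ * A k) hμ ha0 hψ hgrowth hq_smul k

/-- **Statement 9** (Lemma 2: lower bound on the CODER estimation sequence).

The CODER iteration on `ℝ^d` with `m` consecutive coordinate blocks (encoded by the
monotone block map `blk : Fin d → Fin m`): `a₀ = A₀ = 0`, `p₀ = F(x₀)`, and for
`k ≥ 1`: `a_k = (1+γA_{k−1})/(2L)`, `A_k = A_{k−1} + a_k`,
`p_kⁱ = Fⁱ(x_k¹,…,x_k^{i−1}, x_{k−1}ⁱ,…,x_{k−1}ᵐ)`,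
`q_kⁱ = p_kⁱ + (a_{k−1}/a_k)(Fⁱ(x_{k−1}) − p_{k−1}ⁱ)`, and `x_k` minimizes the
estimation sequence `ψ_k(·; u)` (equivalently, each `x_kⁱ` minimizes `ψ_kⁱ`, since
`g` is block-separable). Here `g(x) = ∑ᵢ gⁱ(xⁱ)` with each `gⁱ` depending only on
the coordinates of block `i` and `γ`-strongly convex there. Then for every
`u ∈ ℝ^d` and `k ≥ 1`:
`ψ_k(x_k; u) ≥ ∑_{j=1}^k a_j(⟨F(x_j), x_j − u⟩ + g(x_j) − g(u))
  − ((1+γA_k)/4)‖u − x_k‖²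
  + ∑_{j=1}^k [((1+γA_{j−1})/4)‖x_j − x_{j−1}‖² − (a_j²/(1+γA_j))‖F(x_j) − p_j‖²]`. -/
theorem stmt9 {d m : ℕ} (blk : Fin d → Fin m) (hblk : Monotone blk)
    (F : EuclideanSpace ℝ (Fin d) → EuclideanSpace ℝ (Fin d))
    (γ L : ℝ) (hγ : 0 ≤ γ) (hL : 0 < L)
    -- the block components of the separable regularizer g
    (g : Fin m → EuclideanSpace ℝ (Fin d) → ℝ)
    (hgdep : ∀ (i : Fin m) (z w : EuclideanSpace ℝ (Fin d)),
      (∀ j, blk j = i → z j = w j) → g i z = g i w)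
    (hgsc : ∀ i : Fin m, ConvexOn ℝ Set.univ (fun z : EuclideanSpace ℝ (Fin d) =>
      g i z - γ / 2 * ∑ j ∈ Finset.univ.filter (fun j => blk j = i), (z j) ^ 2))
    (G : EuclideanSpace ℝ (Fin d) → ℝ) (hG : ∀ z, G z = ∑ i, g i z)
    -- step sizes
    (a A : ℕ → ℝ) (ha0 : a 0 = 0) (hA0 : A 0 = 0)
    (ha : ∀ k : ℕ, a (k + 1) = (1 + γ * A k) / (2 * L))
    (hA : ∀ k : ℕ, A (k + 1) = A k + a (k + 1))
    -- iterates, cyclic coordinate gradients, and extrapolated gradients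
    (x p q : ℕ → EuclideanSpace ℝ (Fin d))
    (hp0 : p 0 = F (x 0))
    (hp : ∀ (k : ℕ) (j : Fin d),
      p (k + 1) j = F (WithLp.toLp 2 (fun j' => if blk j' < blk j then x (k + 1) j' else x k j')) j)
    (hq : ∀ (k : ℕ) (j : Fin d),
      q (k + 1) j = p (k + 1) j + a k / a (k + 1) * (F (x k) j - p k j))
    -- estimation sequence and its minimization property
    (ψ : ℕ → EuclideanSpace ℝ (Fin d) → EuclideanSpace ℝ (Fin d) → ℝ)
    (hψ : ∀ (k : ℕ) (z u : EuclideanSpace ℝ (Fin d)),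
      ψ k z u = ∑ j ∈ Finset.Icc 1 k, a j * (⟪q j, z - u⟫ + G z - G u)
        + 1 / 2 * ‖z - x 0‖ ^ 2)
    (hxmin : ∀ k : ℕ, 1 ≤ k → ∀ u z : EuclideanSpace ℝ (Fin d), ψ k (x k) u ≤ ψ k z u) :
    ∀ (u : EuclideanSpace ℝ (Fin d)) (k : ℕ), 1 ≤ k →
      ψ k (x k) u ≥
        (∑ j ∈ Finset.Icc 1 k, a j * (⟪F (x j), x j - u⟫ + G (x j) - G u))
        - (1 + γ * A k) / 4 * ‖u - x k‖ ^ 2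
        + ∑ j ∈ Finset.Icc 1 k,
            ((1 + γ * A (j - 1)) / 4 * ‖x j - x (j - 1)‖ ^ 2
              - a j ^ 2 / (1 + γ * A j) * ‖F (x j) - p j‖ ^ 2) :=
  stmt9_general blk F γ L hγ hL g hgsc G hG a A ha0 hA0 ha hA x p q hq ψ hψ hxmin
end
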